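/- arXiv:math/9301206 — 6 statements merged into one kernel-verified Lean document; each statement's English description precedes it below -/
import Mathlib

section
/- Let F be a filter of subsets of ℕ (closed under finite intersections and supersets, containing ℕ) and let n ≥ 1. The n-fold sumset F + F + ⋯ + F, i.e., the set of all iterated symmetric differences X₁ Δ X₂ Δ ⋯ Δ Xₙ with X₁, …, Xₙ ∈ F, equals F if n is odd and equals F^c = {Z ⊆ ℕ : ℕ \ Z ∈ F} if n is even. -/
/-!
Unfolding the iterated sum one summand at a time, `F + ⋯ + F` (with `n + 1` summands) is
`F + (F + ⋯ + F)` (with `n`), so it suffices to know `F + F = F^c` and `F + F^c = F`. Both are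
one-line filter arguments: `A ∩ B ⊆ (A Δ B)ᶜ` and `A ∩ Bᶜ ⊆ A Δ B` give `⊆`, while
`Z = ℕ Δ Zᶜ` and `Z = Z Δ ∅` give `⊇`.
-/

/-- `F` is a filter of subsets of `ℕ`: it contains `ℕ`, is closed under finite (binary)
intersections and under supersets. -/
def IsSetFilter (F : Set (Set ℕ)) : Prop :=
  Set.univ ∈ F ∧ (∀ X ∈ F, ∀ Y ∈ F, X ∩ Y ∈ F) ∧ (∀ X ∈ F, ∀ Y : Set ℕ, X ⊆ Y → Y ∈ F)

open Set
open scoped symmDiff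

def foldrSumset {β : Type*} (op : β → β → β) (b : β) (S : Set β) (n : ℕ) : Set β :=
  {z | ∃ X : Fin n → β, (∀ i, X i ∈ S) ∧ z = (List.ofFn X).foldr op b}

section foldrSumset

variable {β : Type*} (op : β → β → β) (b : β) (S : Set β)

theorem foldrSumset_zero : foldrSumset op b S 0 = {b} := by
  ext z
  simp [foldrSumset]

theorem foldrSumset_succ (n : ℕ) :
    foldrSumset op b S (n + 1) = image2 op S (foldrSumset op b S n) := by
  ext z
  constructor
  · rintro ⟨X, hX, rfl⟩
    exact ⟨X 0, hX 0, _, ⟨fun i => X i.succ, fun i => hX i.succ, rfl⟩, by simp [List.ofFn_succ]⟩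
  · rintro ⟨A, hA, W, ⟨X, hX, rfl⟩, rfl⟩
    exact ⟨Fin.cons A X, Fin.cases hA hX, by simp [List.ofFn_succ]⟩

end foldrSumset

namespace Filter

variable {α : Type*} (f : Filter α)

theorem image2_symmDiff_sets_sets : image2 symmDiff f.sets f.sets = {Z | Zᶜ ∈ f} := by
  ext Z
  constructor
  · rintro ⟨A, hA, B, hB, rfl⟩
    refine mem_of_superset (inter_mem hA hB) fun x hx => ?_
    simp_all
  · intro hZ
    exact ⟨univ, univ_mem, Zᶜ, hZ, by rw [← top_eq_univ, top_symmDiff, hnot_eq_compl, compl_compl]⟩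

theorem image2_symmDiff_sets_compl : image2 symmDiff f.sets {Z | Zᶜ ∈ f} = f.sets := by
  ext Z
  constructor
  · rintro ⟨A, hA, B, hB, rfl⟩
    refine mem_of_superset (inter_mem hA hB) fun x hx => ?_
    simp_all [mem_symmDiff]
  · intro hZ
    exact ⟨Z, hZ, ∅, by simp, symmDiff_bot Z⟩

theorem foldrSumset_symmDiff_sets {n : ℕ} (hn : 1 ≤ n) :
    foldrSumset symmDiff ∅ f.sets n = if Odd n then f.sets else {Z | Zᶜ ∈ f} := by
  induction n, hn using Nat.le_induction with
  | base =>
    simp only [foldrSumset_succ, foldrSumset_zero, image2_singleton_right, ← bot_eq_empty,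
      symmDiff_bot, image_id', Nat.odd_iff, if_true]
  | succ n _ ih =>
    rw [foldrSumset_succ, ih]
    by_cases hodd : Odd n
    · simp [hodd, Nat.odd_add_one, image2_symmDiff_sets_sets]
    · simp [hodd, Nat.odd_add_one, image2_symmDiff_sets_compl]

end Filter

def IsSetFilter.toFilter {F : Set (Set ℕ)} (hF : IsSetFilter F) : Filter ℕ where
  sets := F
  univ_sets := hF.1
  inter_sets hX hY := hF.2.1 _ hX _ hY
  sets_of_superset hX hXY := hF.2.2 _ hX _ hXY

/-- The `n`-fold sumset `F + F + ⋯ + F` (the set of iterated symmetric differences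
`X₁ Δ X₂ Δ ⋯ Δ Xₙ` of members of `F`, i.e. pointwise mod-2 sums of characteristic
functions) equals `F` if `n` is odd, and the dual ideal `F^c = {Z | ℕ \ Z ∈ F}`
if `n` is even. -/
theorem filter_iterated_sum (F : Set (Set ℕ)) (hF : IsSetFilter F) (n : ℕ) (hn : 1 ≤ n) :
    {Z : Set ℕ | ∃ X : Fin n → Set ℕ, (∀ i, X i ∈ F) ∧
        Z = (List.ofFn X).foldr symmDiff ∅}
      = if Odd n then F else {Z : Set ℕ | Zᶜ ∈ F} :=
  hF.toFilter.foldrSumset_symmDiff_sets hn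
end

section
/- Suppose that for each ordinal ξ < ω₂ we are given a countable set I_ξ ⊆ ω₂ (a countable set of ordinals below ω₂), and for each ordinal α < ω₂ an equivalence relation ≃_α on the ordinals below ω₂ such that: (i) ≃_α has at most ℵ₁ equivalence classes; (ii) ξ ≃_α η implies I_ξ ∩ α = I_η ∩ α (where I ∩ α means the set of elements of I that are < α); and (iii) for all α ≤ α′ < ω₂, if ξ ≃_α η and I_ξ ∩ α′ = I_η ∩ α′, then ξ ≃_{α′} η. Then there exists an ordinal α* < ω₂ such that for every ξ < ω₂ and every β < ω₂ there exists η < ω₂ with ξ ≃_{α*} η and I_η ∩ [α*, β) = ∅ (i.e., I_η contains no ordinal γ with α* ≤ γ < β). -/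
open Cardinal Set

/-- The ordinals below `ω₂`, realized as the canonical type of order type `ω₂`
(the second uncountable cardinal as an initial ordinal). -/
noncomputable abbrev Omega2 : Type := (Cardinal.aleph 2 : Cardinal.{0}).ord.ToType

namespace AlphaStarAux

/-- The ordinals below `ω₁`. -/
noncomputable abbrev W1 : Type := (Cardinal.aleph 1 : Cardinal.{0}).ord.ToType

lemma isRegular_aleph_two : Cardinal.IsRegular (Cardinal.aleph 2) := by
  rw [← Ordinal.succ_one]
  exact Cardinal.isRegular_aleph_succ 1

lemma bdd_of_card_lt {c : Cardinal.{0}} (hc : c.IsRegular) {A : Set c.ord.ToType}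
    (hA : #A < c) : ∃ b, ∀ a ∈ A, a < b := by
  haveI inst : IsWellOrder c.ord.ToType (· < ·) := isWellOrder_lt
  have h : #A < Ordinal.cof (@Ordinal.type c.ord.ToType (· < ·) inst) := by
    rwa [Ordinal.type_toType, hc.cof_eq]
  by_contra hne
  push_neg at hne
  have hcof : IsCofinal A := fun b => let ⟨a, ha, hba⟩ := hne b; ⟨a, ha, hba⟩
  have hle := Order.cof_le hcof
  rw [Ordinal.cof_toType, hc.cof_eq] at hle
  exact absurd hA (not_lt.2 hle)

lemma bddOmega {A : Set Omega2} (hA : #A ≤ Cardinal.aleph 1) : ∃ b, ∀ a ∈ A, a < b :=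
  bdd_of_card_lt isRegular_aleph_two
    (hA.trans_lt (Cardinal.aleph_lt_aleph.2 one_lt_two))

lemma bddW1 {A : Set W1} (hA : #A ≤ ℵ₀) : ∃ b, ∀ a ∈ A, a < b :=
  bdd_of_card_lt Cardinal.isRegular_aleph_one (hA.trans_lt Cardinal.aleph0_lt_aleph_one)

lemma existsGtOmega (x : Omega2) : ∃ y, x < y := by
  obtain ⟨b, hb⟩ := bddOmega (A := {x}) (by
    rw [Cardinal.mk_singleton]
    exact one_lt_aleph0.le.trans (Cardinal.aleph0_le_aleph 1))
  exact ⟨b, hb x rfl⟩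

lemma existsGtW1 (x : W1) : ∃ y, x < y := by
  obtain ⟨b, hb⟩ := bddW1 (A := {x}) (by rw [Cardinal.mk_singleton]; exact one_lt_aleph0.le)
  exact ⟨b, hb x rfl⟩

lemma mk_W1 : #W1 = Cardinal.aleph 1 := by
  rw [Cardinal.mk_toType, Cardinal.card_ord]

end AlphaStarAux

/-- Suppose each ordinal `ξ < ω₂` carries a countable set `I ξ` of ordinals below `ω₂`,
and each `α < ω₂` carries an equivalence relation `E α` (written `ξ ≃_α η`) on the
ordinals below `ω₂` such that: (i) `E α` has at most `ℵ₁` classes; (ii) `ξ ≃_α η`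
implies `I ξ ∩ α = I η ∩ α`; (iii) if `α ≤ α'`, `ξ ≃_α η` and `I ξ ∩ α' = I η ∩ α'`,
then `ξ ≃_{α'} η`.  Then there is `α* < ω₂` such that for all `ξ, β < ω₂` there is
`η < ω₂` with `ξ ≃_{α*} η` and `I η ∩ [α*, β) = ∅`. -/
theorem exists_alphaStar
    (I : Omega2 → Set Omega2)
    (hIcount : ∀ ξ : Omega2, (I ξ).Countable)
    (E : Omega2 → Omega2 → Omega2 → Prop)
    (hEquiv : ∀ α : Omega2, Equivalence (E α))
    (hClasses : ∀ α : Omega2, Cardinal.mk (Quot (E α)) ≤ Cardinal.aleph 1)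
    (hInit : ∀ α ξ η : Omega2, E α ξ η → {γ ∈ I ξ | γ < α} = {γ ∈ I η | γ < α})
    (hMono : ∀ α α' : Omega2, α ≤ α' → ∀ ξ η : Omega2, E α ξ η →
      {γ ∈ I ξ | γ < α'} = {γ ∈ I η | γ < α'} → E α' ξ η) :
    ∃ αs : Omega2, ∀ ξ β : Omega2, ∃ η : Omega2,
      E αs ξ η ∧ ∀ γ ∈ I η, ¬(αs ≤ γ ∧ γ < β) := by
  classical
  open AlphaStarAux in
  by_contra hcon
  push_neg at hcon
  -- hcon : ∀ αs, ∃ ξ β, ∀ η, E αs ξ η → ∃ γ ∈ I η, αs ≤ γ ∧ γ < β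
  choose ξf Bf hbad using hcon
  -- Step A : there is α₀ such that above every c there is δ with the trace of
  -- I (ξf δ) below δ contained in α₀.
  have stepA : ∃ α₀ : Omega2, ∀ c : Omega2, ∃ δ : Omega2, c < δ ∧ α₀ < δ ∧
      ∀ γ ∈ I (ξf δ), γ < δ → γ < α₀ := by
    by_contra hA
    push_neg at hA
    -- hA : ∀ α₀, ∃ c, ∀ δ, c < δ → α₀ < δ → ∃ γ ∈ I (ξf δ), γ < δ ∧ α₀ ≤ γ
    choose cc hcc using hA
    -- build a strictly increasing ω₁-chain closed under cc
    have step : ∀ (ν : AlphaStarAux.W1) (g : ∀ μ, μ < ν → Omega2), ∃ b : Omega2,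
        ∀ μ (h : μ < ν), g μ h < b ∧ cc (g μ h) < b := by
      intro ν g
      set A : Set Omega2 := (Set.range fun μ : Set.Iio ν => g μ.1 μ.2) ∪
        (Set.range fun μ : Set.Iio ν => cc (g μ.1 μ.2)) with hAdef
      have hAcard : #A ≤ Cardinal.aleph 1 := by
        refine (Cardinal.mk_union_le _ _).trans ?_
        have h1 : #(Set.Iio ν) ≤ Cardinal.aleph 1 := by
          refine (Cardinal.mk_set_le _).trans ?_
          rw [AlphaStarAux.mk_W1]
        calc #(Set.range fun μ : Set.Iio ν => g μ.1 μ.2) +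
              #(Set.range fun μ : Set.Iio ν => cc (g μ.1 μ.2))
            ≤ Cardinal.aleph 1 + Cardinal.aleph 1 :=
              add_le_add (Cardinal.mk_range_le.trans h1) (Cardinal.mk_range_le.trans h1)
          _ = Cardinal.aleph 1 := Cardinal.add_eq_self (Cardinal.aleph0_le_aleph 1)
      obtain ⟨b, hb⟩ := AlphaStarAux.bddOmega hAcard
      exact ⟨b, fun μ h => ⟨hb _ (Set.mem_union_left _ ⟨⟨μ, h⟩, rfl⟩),
        hb _ (Set.mem_union_right _ ⟨⟨μ, h⟩, rfl⟩)⟩⟩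
    have wf : WellFounded ((· < ·) : AlphaStarAux.W1 → AlphaStarAux.W1 → Prop) :=
      wellFounded_lt
    set a : AlphaStarAux.W1 → Omega2 :=
      wf.fix (fun ν g => Classical.choose (step ν g)) with hadef
    have key : ∀ ν μ, μ < ν → a μ < a ν ∧ cc (a μ) < a ν := by
      intro ν μ h
      have e : a ν = Classical.choose (step ν (fun μ _ => a μ)) := by
        rw [hadef]
        exact wf.fix_eq _ ν
      rw [e]
      exact Classical.choose_spec (step ν (fun μ _ => a μ)) μ h
    -- least upper bound δ of the chain
    have hne : Set.Nonempty {b : Omega2 | ∀ ν, a ν ≤ b} := by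
      obtain ⟨b, hb⟩ := AlphaStarAux.bddOmega (A := Set.range a)
        (Cardinal.mk_range_le.trans AlphaStarAux.mk_W1.le)
      exact ⟨b, fun ν => (hb _ ⟨ν, rfl⟩).le⟩
    have wfΩ : WellFounded ((· < ·) : Omega2 → Omega2 → Prop) := wellFounded_lt
    set δ : Omega2 := wfΩ.min _ hne with hδdef
    have hub : ∀ ν, a ν ≤ δ := wfΩ.min_mem _ hne
    have hlt : ∀ γ, γ < δ → ∃ ν, γ < a ν := by
      intro γ hγ
      by_contra h
      push_neg at h
      exact wfΩ.not_lt_min {b : Omega2 | ∀ ν, a ν ≤ b} (x := γ) (fun ν => h ν) hγ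
    have hstrict : ∀ ν, a ν < δ := by
      intro ν
      obtain ⟨ν', hν'⟩ := AlphaStarAux.existsGtW1 ν
      exact lt_of_lt_of_le (key ν' ν hν').1 (hub ν')
    -- bound the trace of I (ξf δ) below δ
    set T : Set Omega2 := {γ ∈ I (ξf δ) | γ < δ} with hTdef
    have hTc : #T ≤ ℵ₀ := by
      rw [Cardinal.mk_le_aleph0_iff, Set.countable_coe_iff]
      exact (hIcount (ξf δ)).mono (Set.sep_subset _ _)
    have hex : ∀ γ : T, ∃ ν, (γ : Omega2) < a ν := fun γ => hlt γ γ.2.2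
    choose nu hnu using hex
    obtain ⟨ν₀, hν₀⟩ := AlphaStarAux.bddW1 (A := Set.range nu)
      (Cardinal.mk_range_le.trans hTc)
    have htrace : ∀ γ ∈ I (ξf δ), γ < δ → γ < a ν₀ := by
      intro γ hγI hγδ
      have hγT : γ ∈ T := ⟨hγI, hγδ⟩
      have := hν₀ _ ⟨⟨γ, hγT⟩, rfl⟩
      exact lt_trans (hnu ⟨γ, hγT⟩) (key ν₀ _ this).1
    -- contradiction with hcc at a ν₀
    obtain ⟨ν₁, hν₁⟩ := AlphaStarAux.existsGtW1 ν₀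
    have h1 : cc (a ν₀) < δ := lt_of_lt_of_le (key ν₁ ν₀ hν₁).2 (hub ν₁)
    have h2 : a ν₀ < δ := hstrict ν₀
    obtain ⟨γ, hγI, hγδ, hγge⟩ := hcc (a ν₀) δ h1 h2
    exact absurd (htrace γ hγI hγδ) (not_lt.2 hγge)
  obtain ⟨α₀, hgood⟩ := stepA
  choose δf hδ1 hδ2 hδ3 using hgood
  -- Step B : an unbounded fiber of c ↦ class of ξf (δf c)
  have stepB : ∃ q : Quot (E α₀), ∀ c : Omega2, ∃ x, c < x ∧
      Quot.mk (E α₀) (ξf (δf x)) = q := by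
    by_contra hB
    push_neg at hB
    choose m hm using hB
    obtain ⟨b, hb⟩ := AlphaStarAux.bddOmega (A := Set.range m)
      (Cardinal.mk_range_le.trans (hClasses α₀))
    exact hm (Quot.mk (E α₀) (ξf (δf b))) b (hb _ ⟨_, rfl⟩) rfl
  obtain ⟨q, hq⟩ := stepB
  obtain ⟨t₁, ht₁, hq₁⟩ := hq α₀
  set δ₁ := δf t₁ with hδ₁def
  set ξ₁ := ξf δ₁ with hξ₁def
  obtain ⟨t₂, ht₂, hq₂⟩ := hq (max (Bf δ₁) δ₁)
  set δ₂ := δf t₂ with hδ₂def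
  set ξ₂ := ξf δ₂ with hξ₂def
  have hδ₁₂ : δ₁ < δ₂ := lt_trans (lt_of_le_of_lt (le_max_right _ _) ht₂) (hδ1 t₂)
  have hBδ₂ : Bf δ₁ < δ₂ := lt_trans (lt_of_le_of_lt (le_max_left _ _) ht₂) (hδ1 t₂)
  have hE0 : E α₀ ξ₁ ξ₂ :=
    (hEquiv α₀).eqvGen_iff.mp (Quot.eqvGen_exact (hq₁.trans hq₂.symm))
  have tr1 : ∀ γ ∈ I ξ₁, γ < δ₁ → γ < α₀ := hδ3 t₁
  have tr2 : ∀ γ ∈ I ξ₂, γ < δ₂ → γ < α₀ := hδ3 t₂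
  have h0 := hInit α₀ ξ₁ ξ₂ hE0
  have hset : {γ ∈ I ξ₁ | γ < δ₁} = {γ ∈ I ξ₂ | γ < δ₁} := by
    ext γ
    simp only [Set.mem_setOf_eq]
    constructor
    · rintro ⟨hγI, hγlt⟩
      have hγα : γ < α₀ := tr1 γ hγI hγlt
      have hmem : γ ∈ {γ ∈ I ξ₂ | γ < α₀} := h0 ▸ (⟨hγI, hγα⟩ : γ ∈ {γ ∈ I ξ₁ | γ < α₀})
      exact ⟨hmem.1, hγlt⟩
    · rintro ⟨hγI, hγlt⟩
      have hγα : γ < α₀ := tr2 γ hγI (lt_trans hγlt hδ₁₂)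
      have hmem : γ ∈ {γ ∈ I ξ₁ | γ < α₀} := h0 ▸ (⟨hγI, hγα⟩ : γ ∈ {γ ∈ I ξ₂ | γ < α₀})
      exact ⟨hmem.1, hγlt⟩
  have hEδ₁ : E δ₁ ξ₁ ξ₂ := hMono α₀ δ₁ (hδ2 t₁).le ξ₁ ξ₂ hE0 hset
  obtain ⟨γ, hγI, hγge, hγlt⟩ := hbad δ₁ ξ₂ hEδ₁
  have hγδ₂ : γ < δ₂ := lt_trans hγlt hBδ₂
  have hγα : γ < α₀ := tr2 γ hγI hγδ₂
  exact absurd hγge (not_le.2 (lt_trans hγα (hδ2 t₁)))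
end

section
/- Let k : ℕ → ℕ be strictly increasing and let T ⊆ 2^{<ω} be a tree (a set of finite 0-1 sequences closed under initial segments, containing the empty sequence, with every node having an extension in T of every greater length) satisfying: (1) for s ∈ T, both s⌢0 ∈ T and s⌢1 ∈ T if and only if |s| = k_n for some n; (2) for every n, if s₁, …, s_{2ⁿ} lists T ∩ 2^{k_n} in lexicographic order, then for every w ⊆ {1, …, 2ⁿ} with w ≠ ∅ and w ≠ {1, …, 2ⁿ} there is m with k_n ≤ m < k_{n+1} such that for each l, the unique node of T of length m+1 extending s_l takes value 0 at position m if and only if l ∈ w; (3) there is no m such that s(m) = 0 for all s ∈ T ∩ 2^{m+1}, and no m such that s(m) = 1 for all s ∈ T ∩ 2^{m+1}. For a perfect subtree S of T (a subtree in which every node has two incomparable extensions) define A⁰_S = {m : s(m) = 0 for all s ∈ S ∩ 2^{m+1}} and A¹_S = {m : s(m) = 1 for all s ∈ S ∩ 2^{m+1}}. Then for any finitely many perfect subtrees S₁, …, S_m of T, the set ℕ \ (A⁰_{S₁} ∪ A¹_{S₁} ∪ ⋯ ∪ A⁰_{S_m} ∪ A¹_{S_m}) is infinite; in particular the ideal on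 ℕ generated by all sets A⁰_S, A¹_S (S a perfect subtree of T) together with the finite sets is a proper ideal. -/
/-- `T ⊆ 2^{<ω}` is a tree: it contains the empty sequence, is closed under initial
segments, and every node has an extension in `T` of every greater length. -/
def IsTree (T : Set (List Bool)) : Prop :=
  ([] ∈ T) ∧ (∀ s ∈ T, ∀ t : List Bool, t <+: s → t ∈ T) ∧
    (∀ s ∈ T, ∀ n : ℕ, s.length ≤ n → ∃ t ∈ T, t.length = n ∧ s <+: t)

/-- Condition (1): a node `s ∈ T` has both immediate successors `s⌢0, s⌢1` in `T`
exactly when `|s| = k n` for some `n`. -/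
def SplitsExactlyAt (k : ℕ → ℕ) (T : Set (List Bool)) : Prop :=
  ∀ s ∈ T, ((s ++ [false] ∈ T ∧ s ++ [true] ∈ T) ↔ ∃ n : ℕ, s.length = k n)

/-- Condition (2): for every `n` and every nonempty proper subset `W` of the level
`T ∩ 2^{k n}` there is `m` with `k n ≤ m < k (n+1)` such that the (unique) node of `T`
of length `m+1` extending a node `s` of the level takes value `0` at position `m`
exactly when `s ∈ W`.  (The subsets `W` of the level correspond, via the lexicographic
listing `s₁, …, s_{2ⁿ}` of the level, to the subsets `w ⊆ {1, …, 2ⁿ}`.) -/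
def SeparatesLevels (k : ℕ → ℕ) (T : Set (List Bool)) : Prop :=
  ∀ n : ℕ, ∀ W : Set (List Bool),
    W ⊆ {s ∈ T | s.length = k n} → W ≠ ∅ → W ≠ {s ∈ T | s.length = k n} →
      ∃ m : ℕ, k n ≤ m ∧ m < k (n + 1) ∧
        ∀ s ∈ T, s.length = k n → ∀ t ∈ T, t.length = m + 1 → s <+: t →
          (t.getD m true = false ↔ s ∈ W)

/-- Condition (3): there is no `m` such that `s (m) = 0` for all `s ∈ T ∩ 2^{m+1}`, and
no `m` such that `s (m) = 1` for all `s ∈ T ∩ 2^{m+1}`. -/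
def NoConstantCoordinate (T : Set (List Bool)) : Prop :=
  (¬ ∃ m : ℕ, ∀ t ∈ T, t.length = m + 1 → t.getD m true = false) ∧
  (¬ ∃ m : ℕ, ∀ t ∈ T, t.length = m + 1 → t.getD m false = true)

/-- `S` is a perfect subtree of `T`: a subset of `T` which is itself closed under initial
segments, contains the empty sequence, and in which every node has two incomparable
extensions. -/
def IsPerfectSubtree (T S : Set (List Bool)) : Prop :=
  S ⊆ T ∧ ([] ∈ S) ∧ (∀ s ∈ S, ∀ t : List Bool, t <+: s → t ∈ S) ∧
    ∀ s ∈ S, ∃ t₁ ∈ S, ∃ t₂ ∈ S,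
      s <+: t₁ ∧ s <+: t₂ ∧ ¬ t₁ <+: t₂ ∧ ¬ t₂ <+: t₁

/-- `A⁰_S = {m : s(m) = 0 for all s ∈ S ∩ 2^{m+1}}`. -/
def A0 (S : Set (List Bool)) : Set ℕ :=
  {m | ∀ t ∈ S, t.length = m + 1 → t.getD m true = false}

/-- `A¹_S = {m : s(m) = 1 for all s ∈ S ∩ 2^{m+1}}`. -/
def A1 (S : Set (List Bool)) : Set ℕ :=
  {m | ∀ t ∈ S, t.length = m + 1 → t.getD m false = true}

/-! The levels of a perfect subtree grow without bound, because the two incomparable extensions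
of a node become two distinct nodes above it at a common higher level. So at a splitting level
`k n` beyond any given bound every `Sⱼ` has more than `m` nodes. Choosing one node of each `Sⱼ`
gives a nonempty set `W` of at most `m` nodes of that level which misses a node of every `Sⱼ`;
the coordinate that condition (2) provides for `W` is then constant on no `Sⱼ`. -/

open Filter

def level (S : Set (List Bool)) (a : ℕ) : Set (List Bool) := {s ∈ S | s.length = a}

lemma level_finite (S : Set (List Bool)) (a : ℕ) : (level S a).Finite :=
  (List.finite_length_eq Bool a).subset fun _ hs => hs.2

namespace IsPerfectSubtree

variable {T S : Set (List Bool)} {s : List Bool}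

lemma exists_longer (hS : IsPerfectSubtree T S) (hs : s ∈ S) :
    ∃ t ∈ S, s <+: t ∧ s.length < t.length := by
  obtain ⟨t₁, ht₁, t₂, -, hst₁, hst₂, h₁₂, -⟩ := hS.2.2.2 s hs
  refine ⟨t₁, ht₁, hst₁, hst₁.length_le.lt_of_ne fun hlen => h₁₂ ?_⟩
  rwa [← hst₁.eq_of_length hlen]

lemma exists_extension (hS : IsPerfectSubtree T S) (hs : s ∈ S) {a : ℕ} (ha : s.length ≤ a) :
    ∃ t ∈ S, t.length = a ∧ s <+: t := by
  have hlong : ∀ b, ∃ t ∈ S, s <+: t ∧ b ≤ t.length := by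
    intro b
    induction b with
    | zero => exact ⟨s, hs, List.prefix_refl s, Nat.zero_le _⟩
    | succ b ih =>
      obtain ⟨t, ht, hst, hbt⟩ := ih
      obtain ⟨u, hu, htu, htu_len⟩ := hS.exists_longer ht
      exact ⟨u, hu, hst.trans htu, by omega⟩
  obtain ⟨t, ht, hst, hat⟩ := hlong a
  refine ⟨t.take a, hS.2.2.1 t ht _ (List.take_prefix a t), by simpa using hat, ?_⟩
  simpa [List.take_of_length_le ha] using hst.take a

lemma image_take_level (hS : IsPerfectSubtree T S) {a b : ℕ} (hab : a ≤ b) :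
    (List.take a) '' level S b = level S a := by
  ext s
  constructor
  · rintro ⟨t, ⟨ht, rfl⟩, rfl⟩
    exact ⟨hS.2.2.1 t ht _ (List.take_prefix _ t), by simpa using hab⟩
  · rintro ⟨hs, rfl⟩
    obtain ⟨t, ht, rfl, hst⟩ := hS.exists_extension hs hab
    exact ⟨t, ⟨ht, rfl⟩, (List.prefix_iff_eq_take.mp hst).symm⟩

lemma ncard_level_mono (hS : IsPerfectSubtree T S) {a b : ℕ} (hab : a ≤ b) :
    (level S a).ncard ≤ (level S b).ncard := by
  rw [← hS.image_take_level hab]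
  exact Set.ncard_image_le (level_finite S b)

/-- Two incomparable extensions of a node of level `a` collide under truncation to level `a`. -/
lemma exists_ncard_level_lt (hS : IsPerfectSubtree T S) (a : ℕ) :
    ∃ b, (level S a).ncard < (level S b).ncard := by
  obtain ⟨s, hs, hsa, -⟩ := hS.exists_extension hS.2.1 (Nat.zero_le a)
  obtain ⟨t₁, ht₁, t₂, ht₂, hst₁, hst₂, h₁₂, h₂₁⟩ := hS.2.2.2 s hs
  set b := max t₁.length t₂.length
  obtain ⟨u₁, hu₁, hu₁b, htu₁⟩ := hS.exists_extension ht₁ (le_max_left _ _)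
  obtain ⟨u₂, hu₂, hu₂b, htu₂⟩ := hS.exists_extension ht₂ (le_max_right _ _)
  have hab : a ≤ b := hsa ▸ hst₁.length_le.trans (le_max_left _ _)
  have hne : u₁ ≠ u₂ := by
    rintro rfl
    rcases List.prefix_or_prefix_of_prefix htu₁ htu₂ with h | h
    exacts [h₁₂ h, h₂₁ h]
  have htake : ∀ u, s <+: u → u.take a = s := fun u h =>
    hsa ▸ (List.prefix_iff_eq_take.mp h).symm
  have hnot_inj : ¬ Set.InjOn (List.take a) (level S b) := fun hinj =>
    hne (hinj ⟨hu₁, hu₁b⟩ ⟨hu₂, hu₂b⟩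
      ((htake u₁ (hst₁.trans htu₁)).trans (htake u₂ (hst₂.trans htu₂)).symm))
  refine ⟨b, ?_⟩
  rw [← hS.image_take_level hab]
  exact (Set.ncard_image_le (level_finite S b)).lt_of_ne
    fun h => hnot_inj ((Set.ncard_image_iff (level_finite S b)).mp h)

lemma eventually_lt_ncard_level (hS : IsPerfectSubtree T S) (c : ℕ) :
    ∀ᶠ a in atTop, c < (level S a).ncard := by
  obtain ⟨a, ha⟩ : ∃ a, c < (level S a).ncard := by
    induction c with
    | zero =>
      obtain ⟨b, hb⟩ := hS.exists_ncard_level_lt 0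
      exact ⟨b, by omega⟩
    | succ c ih =>
      obtain ⟨a, ha⟩ := ih
      obtain ⟨b, hb⟩ := hS.exists_ncard_level_lt a
      exact ⟨b, by omega⟩
  exact eventually_atTop.2 ⟨a, fun b hab => ha.trans_le (hS.ncard_level_mono hab)⟩

lemma notMem_A0_and_notMem_A1 (hS : IsPerfectSubtree T S) {W : Set (List Bool)} {a i : ℕ}
    (hai : a ≤ i)
    (hW : ∀ s ∈ T, s.length = a → ∀ t ∈ T, t.length = i + 1 → s <+: t →
      (t.getD i true = false ↔ s ∈ W))
    {x y : List Bool} (hx : x ∈ level S a) (hxW : x ∈ W) (hy : y ∈ level S a) (hyW : y ∉ W) :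
    i ∉ A0 S ∧ i ∉ A1 S := by
  obtain ⟨t, ht, ht_len, hyt⟩ := hS.exists_extension hy.1 (a := i + 1) (by rw [hy.2]; omega)
  obtain ⟨u, hu, hu_len, hxu⟩ := hS.exists_extension hx.1 (a := i + 1) (by rw [hx.2]; omega)
  simp only [A0, A1, Set.mem_ofPred_eq]
  refine ⟨fun h0 => hyW ?_, fun h1 => ?_⟩
  · exact (hW y (hS.1 hy.1) hy.2 t (hS.1 ht) ht_len hyt).1 (h0 t ht ht_len)
  · have hu0 := (hW x (hS.1 hx.1) hx.2 u (hS.1 hu) hu_len hxu).2 hxW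
    have hu1 : u.getD i false = true := h1 u hu hu_len
    rw [List.getD_eq_getElem _ _ (by omega)] at hu0 hu1
    simp [hu0] at hu1

end IsPerfectSubtree

theorem tree_ideal_is_proper_general
    (k : ℕ → ℕ) (hk : StrictMono k)
    (T : Set (List Bool))
    (h2 : SeparatesLevels k T)
    (m : ℕ) (S : Fin m → Set (List Bool))
    (hS : ∀ j : Fin m, IsPerfectSubtree T (S j)) :
    {i : ℕ | ∀ j : Fin m, i ∉ A0 (S j) ∧ i ∉ A1 (S j)}.Infinite := by
  rcases isEmpty_or_nonempty (Fin m) with hm | hm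
  · simpa using Set.infinite_univ
  refine Set.infinite_of_forall_exists_gt fun N => ?_
  obtain ⟨n, hNn, hlarge⟩ := ((hk.tendsto_atTop.eventually_gt_atTop N).and
    (hk.tendsto_atTop.eventually
      (eventually_all.2 fun j => (hS j).eventually_lt_ncard_level m))).exists
  choose x hx using fun j => Set.nonempty_of_ncard_ne_zero (hlarge j).ne_bot
  have hout : ∀ j, ∃ y ∈ level (S j) (k n), y ∉ Set.range x := fun j =>
    Set.not_subset.mp fun hsub => (hlarge j).not_ge <|
      (Set.ncard_le_ncard hsub (Set.finite_range x)).trans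
        ((Finite.card_range_le x).trans_eq (Nat.card_fin m))
  obtain ⟨i, hni, -, hsep⟩ := h2 n (Set.range x)
    (Set.range_subset_iff.2 fun j => ⟨(hS j).1 (hx j).1, (hx j).2⟩)
    (Set.range_nonempty x).ne_empty
    fun h => by
      obtain ⟨y, hy, hyW⟩ := hout hm.some
      exact hyW (h ▸ ⟨(hS hm.some).1 hy.1, hy.2⟩)
  refine ⟨i, fun j => ?_, hNn.trans_le hni⟩
  obtain ⟨y, hy, hyW⟩ := hout j
  exact (hS j).notMem_A0_and_notMem_A1 hni hsep (hx j) ⟨j, rfl⟩ hy hyW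

/-- For any finitely many perfect subtrees `S₁, …, S_m` of `T`, the complement of
`A⁰_{S₁} ∪ A¹_{S₁} ∪ ⋯ ∪ A⁰_{S_m} ∪ A¹_{S_m}` is infinite; in particular the ideal
generated by the sets `A⁰_S, A¹_S` together with the finite sets is proper. -/
theorem tree_ideal_is_proper
    (k : ℕ → ℕ) (hk : StrictMono k)
    (T : Set (List Bool)) (hT : IsTree T)
    (h1 : SplitsExactlyAt k T) (h2 : SeparatesLevels k T)
    (h3 : NoConstantCoordinate T)
    (m : ℕ) (S : Fin m → Set (List Bool))
    (hS : ∀ j : Fin m, IsPerfectSubtree T (S j)) :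
    {i : ℕ | ∀ j : Fin m, i ∉ A0 (S j) ∧ i ∉ A1 (S j)}.Infinite :=
  tree_ideal_is_proper_general k hk T h2 m S hS
end

section
/- There exist a strictly increasing sequence k : ℕ → ℕ and a tree T ⊆ 2^{<ω} (closed under initial segments, containing the empty sequence, with every node having an extension in T of every greater length) such that: (1) for s ∈ T, both s⌢0 ∈ T and s⌢1 ∈ T if and only if |s| = k_n for some n; (2) for every n, if s₁, …, s_{2ⁿ} lists T ∩ 2^{k_n} in lexicographic order, then for every w ⊆ {1, …, 2ⁿ} with w ≠ ∅ and w ≠ {1, …, 2ⁿ} there is m with k_n ≤ m < k_{n+1} such that for each l, the unique node of T of length m+1 extending s_l takes value 0 at position m if and only if l ∈ w; (3) there is no m such that s(m) = 0 for all s ∈ T ∩ 2^{m+1}, and no m such that s(m) = 1 for all s ∈ T ∩ 2^{m+1}. -/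
/-!
Branches are indexed by free bits `α : ℕ → Bool`, one for each splitting level `k n`, and `T`
is the set of their initial segments.  After level `k n` a branch runs through one position for
each nonempty proper subset `W` of the `2 ^ n` nodes of that level, and there reads `0` exactly
when it passes through `W`.  These positions depend only on bits fixed below them, so `T`
splits exactly at the levels `k n`; and since `W` is neither empty nor the whole level, every
such coordinate takes both values.
-/

namespace BoolTree

def initSeg (x : ℕ → Bool) (L : ℕ) : List Bool := (List.range L).map x

def branchTree (X : Set (ℕ → Bool)) : Set (List Bool) :=
  {s | ∃ x ∈ X, initSeg x s.length = s}

section initSeg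

variable (x : ℕ → Bool)

@[simp]
lemma length_initSeg (L : ℕ) : (initSeg x L).length = L := by
  simp [initSeg]

lemma getD_initSeg {m L : ℕ} (h : m < L) (d : Bool) : (initSeg x L).getD m d = x m := by
  simp [initSeg, List.getD_eq_getElem?_getD, h]

lemma take_initSeg {m L : ℕ} (h : m ≤ L) : (initSeg x L).take m = initSeg x m := by
  rw [initSeg, ← List.map_take, List.take_range, Nat.min_eq_left h, initSeg]

lemma initSeg_prefix {m L : ℕ} (h : m ≤ L) : initSeg x m <+: initSeg x L :=
  take_initSeg x h ▸ List.take_prefix _ _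

lemma initSeg_succ (L : ℕ) : initSeg x (L + 1) = initSeg x L ++ [x L] := by
  simp [initSeg, List.range_succ]

lemma initSeg_length_of_prefix {s : List Bool} {L : ℕ} (h : s <+: initSeg x L) :
    initSeg x s.length = s := by
  have hL : s.length ≤ L := by simpa using h.length_le
  exact (take_initSeg x hL).symm.trans (List.prefix_iff_eq_take.mp h).symm

lemma initSeg_congr {y : ℕ → Bool} {L : ℕ} (h : ∀ i < L, x i = y i) :
    initSeg x L = initSeg y L :=
  List.map_congr_left fun i hi => h i (List.mem_range.mp hi)

end initSeg

section branchTree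

variable {X : Set (ℕ → Bool)}

lemma initSeg_mem_branchTree {x : ℕ → Bool} (hx : x ∈ X) (L : ℕ) :
    initSeg x L ∈ branchTree X :=
  ⟨x, hx, by rw [length_initSeg]⟩

lemma mem_branchTree_of_prefix {x : ℕ → Bool} (hx : x ∈ X) {s : List Bool} {L : ℕ}
    (h : s <+: initSeg x L) : s ∈ branchTree X :=
  ⟨x, hx, initSeg_length_of_prefix x h⟩

lemma isTree_branchTree (hX : X.Nonempty) : IsTree (branchTree X) := by
  obtain ⟨x, hx⟩ := hX
  refine ⟨initSeg_mem_branchTree hx 0, ?_, ?_⟩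
  · rintro s ⟨y, hy, hs⟩ t ht
    exact mem_branchTree_of_prefix hy (hs.symm ▸ ht)
  · rintro s ⟨y, hy, hs⟩ n hn
    exact ⟨initSeg y n, initSeg_mem_branchTree hy n, length_initSeg y n,
      hs ▸ initSeg_prefix y hn⟩

lemma noConstantCoordinate_branchTree (h : ∀ m b, ∃ x ∈ X, x m = b) :
    NoConstantCoordinate (branchTree X) := by
  have attains (m : ℕ) (b d : Bool) :
      ∃ t ∈ branchTree X, t.length = m + 1 ∧ t.getD m d = b := by
    obtain ⟨x, hx, hxm⟩ := h m b
    exact ⟨initSeg x (m + 1), initSeg_mem_branchTree hx _, length_initSeg x _,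
      by rw [getD_initSeg x (Nat.lt_succ_self m), hxm]⟩
  constructor <;> rintro ⟨m, hm⟩
  · obtain ⟨t, ht, htlen, htm⟩ := attains m true true
    nomatch htm.symm.trans (hm t ht htlen)
  · obtain ⟨t, ht, htlen, htm⟩ := attains m false false
    nomatch htm.symm.trans (hm t ht htlen)

lemma splitsExactlyAt_branchTree (k : ℕ → ℕ) (F : (ℕ → Bool) → ℕ → Bool)
    (hfree : ∀ α n, F α (k n) = α n)
    (hdep : ∀ α α' m, (∀ i, k i ≤ m → α i = α' i) → F α m = F α' m) :
    SplitsExactlyAt k (branchTree (Set.range F)) := by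
  rintro s ⟨_, ⟨α, rfl⟩, hs⟩
  constructor
  · rintro ⟨⟨_, ⟨α₀, rfl⟩, h₀⟩, ⟨_, ⟨α₁, rfl⟩, h₁⟩⟩
    by_contra! hne
    simp only [List.length_append, List.length_singleton, initSeg_succ] at h₀ h₁
    obtain ⟨hs₀, hb₀⟩ := List.append_inj' h₀ rfl
    obtain ⟨hs₁, hb₁⟩ := List.append_inj' h₁ rfl
    have hagree (i : ℕ) (hi : k i ≤ s.length) : α₀ i = α₁ i := by
      have hlt : k i < s.length := lt_of_le_of_ne hi (hne i ·.symm)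
      rw [← hfree α₀, ← hfree α₁, ← getD_initSeg (F α₀) hlt false,
        ← getD_initSeg (F α₁) hlt false, hs₀, hs₁]
    simpa [List.singleton_inj.mp hb₀, List.singleton_inj.mp hb₁]
      using hdep α₀ α₁ s.length hagree
  · rintro ⟨n, hn⟩
    have extend (b : Bool) : s ++ [b] ∈ branchTree (Set.range F) := by
      refine ⟨F (Function.update α n b), ⟨_, rfl⟩, ?_⟩
      rw [List.length_append, List.length_singleton, initSeg_succ, hn, hfree,
        Function.update_self, ← hn]
      refine congrArg (· ++ [b]) ((initSeg_congr _ fun m hm => hdep _ _ m fun i hi => ?_).trans hs)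
      exact Function.update_of_ne (by rintro rfl; omega) _ _
    exact ⟨extend false, extend true⟩

end branchTree

end BoolTree

lemma Nat.exists_lt_testBit_eq {N j : ℕ} (h0 : j ≠ 0) (h1 : j < 2 ^ N - 1) (b : Bool) :
    ∃ i < N, j.testBit i = b := by
  have lt_of_testBit {i : ℕ} (hi : j.testBit i = true) : i < N :=
    (Nat.pow_lt_pow_iff_right one_lt_two).mp ((Nat.ge_two_pow_of_testBit hi).trans_lt (by omega))
  cases b
  · obtain ⟨i, hi⟩ := Nat.exists_testBit_ne_of_ne h1.ne
    rw [Nat.testBit_two_pow_sub_one] at hi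
    by_cases hiN : i < N
    · exact ⟨i, hiN, by simpa [hiN] using hi⟩
    · exact absurd (lt_of_testBit (by simpa [hiN] using hi)) hiN
  · obtain ⟨i, hi⟩ := Nat.exists_testBit_of_ne_zero h0
    exact ⟨i, lt_of_testBit hi, hi⟩

namespace SeparatingTree

open BoolTree

def k : ℕ → ℕ
  | 0 => 0
  | n + 1 => k n + (2 ^ 2 ^ n - 1)

lemma k_succ (n : ℕ) : k (n + 1) = k n + (2 ^ 2 ^ n - 1) := rfl

lemma one_lt_two_pow_two_pow (n : ℕ) : 1 < 2 ^ 2 ^ n :=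
  Nat.one_lt_two_pow (by positivity)

lemma k_strictMono : StrictMono k :=
  strictMono_nat_of_lt_succ fun n => by
    have := one_lt_two_pow_two_pow n
    rw [k_succ]; omega

def level (m : ℕ) : ℕ := Nat.findGreatest (fun n => k n ≤ m) m

lemma le_level_iff {i m : ℕ} : i ≤ level m ↔ k i ≤ m :=
  ⟨fun h => (k_strictMono.monotone h).trans
      (Nat.findGreatest_spec (P := fun n => k n ≤ m) (Nat.zero_le m) (Nat.zero_le m)),
    fun h => Nat.le_findGreatest ((k_strictMono.id_le i).trans h) h⟩

lemma k_level_le (m : ℕ) : k (level m) ≤ m := le_level_iff.mp le_rfl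

lemma lt_k_level_succ (m : ℕ) : m < k (level m + 1) :=
  lt_of_not_ge fun h => (Nat.lt_succ_self _).not_ge (le_level_iff.mpr h)

lemma level_eq {n m : ℕ} (h₁ : k n ≤ m) (h₂ : m < k (n + 1)) : level m = n :=
  le_antisymm (Nat.lt_succ_iff.mp (lt_of_not_ge fun h => h₂.not_ge (le_level_iff.mp h)))
    (le_level_iff.mpr h₁)

def encode (n : ℕ) (α : ℕ → Bool) : ℕ := Nat.ofBits fun i : Fin n => α i

lemma encode_lt (n : ℕ) (α : ℕ → Bool) : encode n α < 2 ^ n := Nat.ofBits_lt_two_pow _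

lemma testBit_encode {n i : ℕ} (α : ℕ → Bool) (h : i < n) : (encode n α).testBit i = α i :=
  Nat.testBit_ofBits_lt _ i h

lemma encode_testBit {n u : ℕ} (h : u < 2 ^ n) : encode n (u.testBit ·) = u := by
  rw [encode, Nat.ofBits_testBit, Nat.mod_eq_of_lt h]

lemma encode_congr {n : ℕ} {α α' : ℕ → Bool} (h : ∀ i < n, α i = α' i) :
    encode n α = encode n α' :=
  congrArg Nat.ofBits (funext fun i => h i i.isLt)

/-- Position `k n` carries the free bit `α n`; position `k n + j` with `0 < j < 2 ^ 2 ^ n - 1`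
carries bit number `encode n α` of `j`.  Reading `j` as a subset of the `2 ^ n` nodes of
level `k n`, these positions run through all nonempty proper subsets of the level. -/
def branch (α : ℕ → Bool) (m : ℕ) : Bool :=
  if m = k (level m) then α (level m) else (m - k (level m)).testBit (encode (level m) α)

lemma branch_k (α : ℕ → Bool) (n : ℕ) : branch α (k n) = α n := by
  rw [branch, level_eq le_rfl (k_strictMono n.lt_succ_self), if_pos rfl]

lemma branch_of_lt {α : ℕ → Bool} {n m : ℕ} (h₁ : k n < m) (h₂ : m < k (n + 1)) :
    branch α m = (m - k n).testBit (encode n α) := by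
  rw [branch, level_eq h₁.le h₂, if_neg h₁.ne']

lemma branch_congr {α α' : ℕ → Bool} {m : ℕ} (h : ∀ i, k i ≤ m → α i = α' i) :
    branch α m = branch α' m := by
  have h' (i : ℕ) (hi : i ≤ level m) : α i = α' i := h i (le_level_iff.mp hi)
  rw [branch, branch, h' _ le_rfl, encode_congr fun i hi => h' i hi.le]

lemma initSeg_branch_congr {n : ℕ} {α α' : ℕ → Bool} (h : ∀ i < n, α i = α' i) :
    initSeg (branch α) (k n) = initSeg (branch α') (k n) :=
  initSeg_congr _ fun _ hm => branch_congr fun i hi =>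
    h i (k_strictMono.lt_iff_lt.mp (hi.trans_lt hm))

lemma exists_branch_eq (m : ℕ) (b : Bool) : ∃ α, branch α m = b := by
  rcases (k_level_le m).eq_or_lt with h | h
  · exact ⟨fun _ => b, by rw [← h, branch_k]⟩
  · have hlt := lt_k_level_succ m
    rw [k_succ] at hlt
    obtain ⟨u, hu, hub⟩ := Nat.exists_lt_testBit_eq (N := 2 ^ level m) (j := m - k (level m))
      (by omega) (by omega) b
    exact ⟨(u.testBit ·), by rw [branch_of_lt h (lt_k_level_succ m), encode_testBit hu, hub]⟩

def tree : Set (List Bool) := branchTree (Set.range branch)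

lemma isTree_tree : IsTree tree := isTree_branchTree (Set.range_nonempty _)

lemma splitsExactlyAt_tree : SplitsExactlyAt k tree :=
  splitsExactlyAt_branchTree k branch branch_k fun _ _ _ => branch_congr

lemma noConstantCoordinate_tree : NoConstantCoordinate tree :=
  noConstantCoordinate_branchTree fun m b =>
    let ⟨α, h⟩ := exists_branch_eq m b
    ⟨branch α, ⟨α, rfl⟩, h⟩

lemma separatesLevels_tree : SeparatesLevels k tree := by
  classical
  intro n W hWsub hWne hWproper
  -- `j` is the complement of `W` as a set of node indices, so position `k n + j` reads `0` on `W`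
  set j := Nat.ofBits fun u : Fin (2 ^ n) =>
    decide (initSeg (branch (u.val.testBit ·)) (k n) ∉ W) with hj_def
  have hj (α : ℕ → Bool) :
      j.testBit (encode n α) = decide (initSeg (branch α) (k n) ∉ W) := by
    rw [hj_def, Nat.testBit_ofBits_lt _ _ (encode_lt n α),
      initSeg_branch_congr fun i hi => testBit_encode α hi]
  have level_node (s : List Bool) (hs : s ∈ {s ∈ tree | s.length = k n}) :
      ∃ α, initSeg (branch α) (k n) = s := by
    obtain ⟨⟨_, ⟨α, rfl⟩, hα⟩, hlen⟩ := hs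
    exact ⟨α, hlen ▸ hα⟩
  obtain ⟨s₀, hs₀⟩ := Set.nonempty_iff_ne_empty.mpr hWne
  obtain ⟨s₁, hs₁, hs₁W⟩ : ∃ s ∈ {s ∈ tree | s.length = k n}, s ∉ W := by
    by_contra! h
    exact hWproper (hWsub.antisymm h)
  obtain ⟨α₀, rfl⟩ := level_node s₀ (hWsub hs₀)
  obtain ⟨α₁, rfl⟩ := level_node _ hs₁
  have hj0 : j ≠ 0 := fun h => by simpa [h, hs₁W] using hj α₁
  have hj1 : j < 2 ^ 2 ^ n - 1 := by
    refine lt_of_le_of_ne (Nat.le_sub_one_of_lt (Nat.ofBits_lt_two_pow _)) fun h => ?_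
    simpa [h, encode_lt n α₀, hs₀] using hj α₀
  have := one_lt_two_pow_two_pow n
  refine ⟨k n + j, by omega, by rw [k_succ]; omega, ?_⟩
  rintro s - hs t ⟨_, ⟨α, rfl⟩, ht⟩ htlen hst
  have hsα : initSeg (branch α) (k n) = s :=
    hs ▸ initSeg_length_of_prefix _ (ht.symm ▸ hst)
  rw [← ht, htlen, getD_initSeg _ (Nat.lt_succ_self _),
    branch_of_lt (n := n) (by omega) (by rw [k_succ]; omega), Nat.add_sub_cancel_left, hj, hsα]
  simp

end SeparatingTree

/-- There exist a strictly increasing sequence `k` and a tree `T ⊆ 2^{<ω}` satisfying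
conditions (1), (2) and (3). -/
theorem exists_separating_tree :
    ∃ k : ℕ → ℕ, StrictMono k ∧ ∃ T : Set (List Bool), IsTree T ∧
      SplitsExactlyAt k T ∧ SeparatesLevels k T ∧ NoConstantCoordinate T :=
  ⟨SeparatingTree.k, SeparatingTree.k_strictMono, SeparatingTree.tree, SeparatingTree.isTree_tree,
    SeparatingTree.splitsExactlyAt_tree, SeparatingTree.separatesLevels_tree,
    SeparatingTree.noConstantCoordinate_tree⟩
end

section
/- Let B be a family of subsets of ℕ such that every intersection of finitely many members of B has positive lower density (liminf_{n→∞} |X ∩ {0,…,n−1}| / n > 0). Then every member of the filter generated by B has positive lower density; consequently, the filter generated by B, identified with a subset of 2^ω, is meager. -/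
open scoped Classical in
/-- The lower density of `X ⊆ ℕ`: `liminf |X ∩ {0,…,n−1}| / n`. -/
noncomputable def lowerDensity (X : Set ℕ) : ℝ :=
  Filter.liminf (fun n => (((Finset.range n).filter (· ∈ X)).card : ℝ) / n) Filter.atTop

open scoped Classical in
/-- The characteristic function of `X ⊆ ℕ`, as a point of Cantor space `2^ω = ℕ → Bool`. -/
noncomputable def chi (X : Set ℕ) : ℕ → Bool := fun n => if n ∈ X then true else false

open scoped Classical

lemma density_fn_nonneg (X : Set ℕ) (n : ℕ) :
    0 ≤ (((Finset.range n).filter (· ∈ X)).card : ℝ) / n := by positivity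

lemma density_fn_bddBelow (X : Set ℕ) :
    Filter.IsBoundedUnder (· ≥ ·) Filter.atTop
      (fun n => (((Finset.range n).filter (· ∈ X)).card : ℝ) / n) :=
  ⟨0, Filter.eventually_map.mpr (Filter.Eventually.of_forall fun n => density_fn_nonneg X n)⟩

lemma lowerDensity_mono {X Y : Set ℕ} (h : X ⊆ Y) : lowerDensity X ≤ lowerDensity Y := by
  refine Filter.liminf_le_liminf ?_ (density_fn_bddBelow X) ?_
  · refine Filter.Eventually.of_forall fun n => ?_
    gcongr
  · refine Filter.isCoboundedUnder_ge_of_le _ (x := 1) fun n => ?_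
    rcases Nat.eq_zero_or_pos n with rfl | hn
    · simp
    · rw [div_le_one (by positivity)]
      exact_mod_cast (Finset.card_filter_le _ _).trans_eq (Finset.card_range n)

/-- If `X` has positive lower density, it meets the interval `[(k+1)!, (k+2)!)`
for all sufficiently large `k`. -/
lemma meets_intervals {X : Set ℕ} (h : 0 < lowerDensity X) :
    ∃ m : ℕ, ∀ k ≥ m, ∃ i, Nat.factorial (k + 1) ≤ i ∧ i < Nat.factorial (k + 2) ∧ i ∈ X := by
  set f : ℕ → ℝ := fun n => (((Finset.range n).filter (· ∈ X)).card : ℝ) / n with hf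
  set L := lowerDensity X with hL
  have hev : ∀ᶠ n in Filter.atTop, L / 2 < f n := by
    refine Filter.eventually_lt_of_lt_liminf ?_ (density_fn_bddBelow X)
    rw [hf]
    show L / 2 < lowerDensity X
    rw [← hL]
    exact half_lt_self h
  obtain ⟨N, hN⟩ := Filter.eventually_atTop.mp hev
  obtain ⟨K, hK⟩ := exists_nat_gt (2 / L)
  refine ⟨max N K, fun k hk => ?_⟩
  by_contra hcon
  push_neg at hcon
  -- every element of X below (k+2)! is below (k+1)!
  have hsub : (Finset.range (Nat.factorial (k + 2))).filter (· ∈ X) ⊆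
      Finset.range (Nat.factorial (k + 1)) := by
    intro i hi
    simp only [Finset.mem_filter, Finset.mem_range] at hi ⊢
    by_contra hge
    push_neg at hge
    exact absurd hi.2 (hcon i hge hi.1)
  have hcard : (((Finset.range (Nat.factorial (k + 2))).filter (· ∈ X)).card : ℝ)
      ≤ Nat.factorial (k + 1) := by
    exact_mod_cast (Finset.card_le_card hsub).trans_eq (Finset.card_range _)
  have hfac_pos : (0:ℝ) < Nat.factorial (k + 2) := by positivity
  have hfle : f (Nat.factorial (k + 2)) ≤ 1 / (k + 2) := by
    rw [hf]
    have h2 : (Nat.factorial (k + 2) : ℝ) = (k + 2) * Nat.factorial (k + 1) := by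
      rw [Nat.factorial_succ]; push_cast; ring
    rw [div_le_div_iff₀ hfac_pos (by positivity), h2]
    calc (((Finset.range (Nat.factorial (k + 2))).filter (· ∈ X)).card : ℝ) * (k + 2)
        ≤ (Nat.factorial (k + 1) : ℝ) * (k + 2) := by
          have : (0:ℝ) ≤ (k:ℝ) + 2 := by positivity
          exact mul_le_mul_of_nonneg_right hcard this
      _ = 1 * ((k + 2) * Nat.factorial (k + 1)) := by ring
  have hNk : N ≤ Nat.factorial (k + 2) := by
    calc N ≤ k := le_trans (le_max_left N K) hk
      _ ≤ k + 2 := by omega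
      _ ≤ Nat.factorial (k + 2) := Nat.self_le_factorial _
  have hbig : L / 2 < f (Nat.factorial (k + 2)) := hN _ hNk
  have hKk : (2 / L : ℝ) < (k : ℝ) + 2 := by
    have hkK : K ≤ k := le_trans (le_max_right N K) hk
    have : (K : ℝ) ≤ (k : ℝ) := Nat.cast_le.mpr hkK
    linarith
  have hLpos : (0:ℝ) < L := h
  have : (1 : ℝ) / (k + 2) < L / 2 := by
    rw [div_lt_div_iff₀ (by positivity) (by norm_num)]
    rw [div_lt_iff₀ hLpos] at hKk
    linarith
  linarith

/-- The "meets all intervals from `m` on" closed sets. -/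
def trapSet (m : ℕ) : Set (ℕ → Bool) :=
  {f | ∀ k ≥ m, ∃ i ∈ Finset.Ico (Nat.factorial (k + 1)) (Nat.factorial (k + 2)), f i = true}

lemma interval_set_closed (a b : ℕ) :
    IsClosed {f : ℕ → Bool | ∃ i ∈ Finset.Ico a b, f i = true} := by
  have h1 : {f : ℕ → Bool | ∃ i ∈ Finset.Ico a b, f i = true}
      = ⋃ i ∈ Finset.Ico a b, (fun f : ℕ → Bool => f i) ⁻¹' {true} := by
    ext f; simp
  rw [h1]
  exact Set.Finite.isClosed_biUnion (Finset.finite_toSet _) fun i _ =>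
    IsClosed.preimage (continuous_apply i) (isClosed_discrete {true})

lemma trapSet_closed (m : ℕ) : IsClosed (trapSet m) := by
  have h1 : trapSet m = ⋂ k, {f : ℕ → Bool | m ≤ k →
      ∃ i ∈ Finset.Ico (Nat.factorial (k + 1)) (Nat.factorial (k + 2)), f i = true} := by
    ext f
    simp [trapSet]
  rw [h1]
  refine isClosed_iInter fun k => ?_
  by_cases hmk : m ≤ k
  · have h2 : {f : ℕ → Bool | m ≤ k →
        ∃ i ∈ Finset.Ico (Nat.factorial (k + 1)) (Nat.factorial (k + 2)), f i = true}
        = {f : ℕ → Bool | ∃ i ∈ Finset.Ico (Nat.factorial (k + 1)) (Nat.factorial (k + 2)),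
            f i = true} := by
      ext f; simp [hmk]
    rw [h2]
    exact interval_set_closed _ _
  · have h2 : {f : ℕ → Bool | m ≤ k →
        ∃ i ∈ Finset.Ico (Nat.factorial (k + 1)) (Nat.factorial (k + 2)), f i = true}
        = Set.univ := by
      ext f; simp [hmk]
    rw [h2]
    exact isClosed_univ

lemma trapSet_nowhereDense (m : ℕ) : IsNowhereDense (trapSet m) := by
  rw [(trapSet_closed m).isNowhereDense_iff, Set.eq_empty_iff_forall_notMem]
  intro f hf
  have hnhds : trapSet m ∈ nhds f := mem_interior_iff_mem_nhds.mp hf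
  rw [nhds_pi, Filter.mem_pi] at hnhds
  obtain ⟨I, hIfin, t, ht, hsub⟩ := hnhds
  obtain ⟨N, hN⟩ := hIfin.bddAbove
  set g : ℕ → Bool := fun i => if i ∈ I then f i else false with hg
  have hgI : g ∈ I.pi t := by
    intro i hi
    simp only [hg, if_pos hi]
    have h2 := ht i
    rw [nhds_discrete] at h2
    exact Filter.mem_pure.mp h2
  have hgtrap : g ∈ trapSet m := hsub hgI
  set k := max m (N + 1) with hk
  obtain ⟨i, hi, hitrue⟩ := hgtrap k (le_max_left _ _)
  rw [Finset.mem_Ico] at hi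
  have hiN : N < i := by
    have h1 : N + 1 ≤ k := le_max_right _ _
    have h2 : k + 1 ≤ Nat.factorial (k + 1) := Nat.self_le_factorial _
    omega
  have hinotI : i ∉ I := fun hmem => absurd (hN hmem) (not_le.mpr hiN)
  simp only [hg, if_neg hinotI] at hitrue
  exact Bool.false_ne_true hitrue

/-- If every finite intersection of members of `B` has positive lower density, then every
member of the filter generated by `B` has positive lower density; consequently this
filter, identified with a subset of Cantor space, is meager. -/
theorem generated_filter_pos_density_and_meager
    (B : Set (Set ℕ))
    (hB : ∀ C : Finset (Set ℕ), ↑C ⊆ B → 0 < lowerDensity (⋂₀ (C : Set (Set ℕ)))) :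
    (∀ Y ∈ {Y : Set ℕ | ∃ C : Finset (Set ℕ), ↑C ⊆ B ∧ ⋂₀ (C : Set (Set ℕ)) ⊆ Y},
        0 < lowerDensity Y) ∧
      IsMeagre (chi ''
        {Y : Set ℕ | ∃ C : Finset (Set ℕ), ↑C ⊆ B ∧ ⋂₀ (C : Set (Set ℕ)) ⊆ Y}) := by
  have hpos : ∀ Y ∈ {Y : Set ℕ | ∃ C : Finset (Set ℕ), ↑C ⊆ B ∧ ⋂₀ (C : Set (Set ℕ)) ⊆ Y},
      0 < lowerDensity Y := by
    rintro Y ⟨C, hCB, hCY⟩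
    exact lt_of_lt_of_le (hB C hCB) (lowerDensity_mono hCY)
  refine ⟨hpos, ?_⟩
  have hcover : chi '' {Y : Set ℕ | ∃ C : Finset (Set ℕ), ↑C ⊆ B ∧ ⋂₀ (C : Set (Set ℕ)) ⊆ Y}
      ⊆ ⋃ m : ℕ, trapSet m := by
    rintro g ⟨Y, hY, rfl⟩
    obtain ⟨m, hm⟩ := meets_intervals (hpos Y hY)
    refine Set.mem_iUnion.mpr ⟨m, fun k hk => ?_⟩
    obtain ⟨i, h1, h2, h3⟩ := hm k hk
    exact ⟨i, Finset.mem_Ico.mpr ⟨h1, h2⟩, by simp [chi, h3]⟩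
  refine IsMeagre.mono hcover ?_
  refine isMeagre_iUnion fun m => ?_
  rw [isMeagre_iff_countable_union_isNowhereDense]
  exact ⟨{trapSet m}, by simpa using trapSet_nowhereDense m, Set.countable_singleton _,
    by simp⟩
end

section
/- Let F be a free filter on ℕ (a filter containing every cofinite subset of ℕ), identified with a subset of Cantor space 2^ω. If F has the Baire property, then F is meager. Equivalently, every free filter either is meager or does not have the Baire property. -/
open MeasureTheory

/-- A free filter: a proper filter containing every cofinite subset of `ℕ`
(so every member of `F` is infinite). -/
def IsFreeFilter (F : Set (Set ℕ)) : Prop :=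
  IsSetFilter F ∧ ∅ ∉ F ∧ ∀ X : Set ℕ, Xᶜ.Finite → X ∈ F

/-- `μ` is the canonical product probability measure on Cantor space (the infinite product
of uniform measures on `{0,1}`, i.e. Haar measure): every cylinder determined by values on
a finite set `s` has measure `(1/2)^|s|`. -/
def IsCantorMeasure (μ : Measure (ℕ → Bool)) : Prop :=
  ∀ (s : Finset ℕ) (f : ℕ → Bool),
    μ {x : ℕ → Bool | ∀ i ∈ s, x i = f i} = (1 / 2 : ENNReal) ^ s.card

/-!
If a free filter `F` had the Baire property without being meagre, it would be comeagre in a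
basic cylinder `C` fixing the coordinates in a finite set `I`. Flipping every coordinate outside
`I` is a homeomorphism of Cantor space mapping `C` into itself, so by the Baire category theorem
some `x ∈ C` lies in `F` together with its flip. The supports of `x` and of its flip meet only
inside `I`, whereas any two members of a free filter have infinite intersection.
-/

open Set

section BaireCategory

variable {X : Type*} [TopologicalSpace X] {A : Set X}

theorem BaireMeasurableSet.exists_isOpen_nonempty_isMeagre_diff (hA : BaireMeasurableSet A)
    (hA' : ¬IsMeagre A) : ∃ U, IsOpen U ∧ U.Nonempty ∧ IsMeagre (U \ A) := by
  obtain ⟨U, hU, hAU⟩ := hA.residualEq_isOpen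
  refine ⟨U, hU, nonempty_iff_ne_empty.2 fun hU₀ => hA' ?_, ?_⟩
  · subst hU₀
    filter_upwards [hAU] with x hx hxA
    exact hx.mp hxA
  · filter_upwards [hAU] with x hx ⟨hxU, hxA⟩
    exact hxA (hx.mpr hxU)

theorem IsMeagre.exists_mem_and_map_mem [BaireSpace X] {U : Set X} (hU : IsOpen U)
    (hU' : U.Nonempty) (hUA : IsMeagre (U \ A)) (g : X ≃ₜ X) (hg : MapsTo g U U) :
    ∃ x ∈ A, g x ∈ A := by
  have hM : IsMeagre ((U \ A) ∪ g ⁻¹' (U \ A)) :=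
    hUA.union (hUA.preimage_of_isOpenMap g.continuous g.isOpenMap)
  obtain ⟨x, hxU, hxM⟩ := not_subset.1 fun hsub => not_isMeagre_of_isOpen hU hU' (hM.mono hsub)
  simp only [mem_union, mem_sdiff, mem_preimage, not_or, not_and, not_not] at hxM
  exact ⟨x, hxM.1 hxU, hxM.2 (hg hxU)⟩

end BaireCategory

theorem exists_finset_pi_singleton_subset {ι : Type*} {α : ι → Type*}
    [∀ i, TopologicalSpace (α i)] {U : Set (∀ i, α i)} (hU : IsOpen U) {x : ∀ i, α i} (hx : x ∈ U) :
    ∃ I : Finset ι, (I : Set ι).pi (fun i => {x i}) ⊆ U := by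
  obtain ⟨I, u, hu, hIU⟩ := isOpen_pi_iff.1 hU x hx
  exact ⟨I, (pi_mono fun i hi => singleton_subset_iff.2 (hu i hi).2).trans hIU⟩

theorem setOf_chi_eq (X : Set ℕ) : {n | chi X n = true} = X := by
  ext n
  simp [chi]

theorem chi_setOf_eq (x : ℕ → Bool) : chi {n | x n = true} = x := by
  funext n
  cases h : x n <;> simp [chi, h]

theorem mem_image_chi_iff {F : Set (Set ℕ)} {x : ℕ → Bool} :
    x ∈ chi '' F ↔ {n | x n = true} ∈ F := by
  constructor
  · rintro ⟨X, hX, rfl⟩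
    rwa [setOf_chi_eq]
  · exact fun hx => ⟨_, hx, chi_setOf_eq x⟩

theorem IsFreeFilter.infinite_inter {F : Set (Set ℕ)} (hF : IsFreeFilter F) {X Y : Set ℕ}
    (hX : X ∈ F) (hY : Y ∈ F) : (X ∩ Y).Infinite := by
  obtain ⟨⟨-, hinter, -⟩, hempty, hcofinite⟩ := hF
  intro hfin
  have := hinter _ (hinter X hX Y hY) _ (hcofinite _ (by rwa [compl_compl]))
  rw [inter_compl_self] at this
  exact hempty this

def flipOutside (I : Finset ℕ) : (ℕ → Bool) ≃ₜ (ℕ → Bool) where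
  toFun x n := if n ∈ I then x n else !x n
  invFun x n := if n ∈ I then x n else !x n
  left_inv x := by funext n; dsimp only; split_ifs <;> simp
  right_inv x := by funext n; dsimp only; split_ifs <;> simp
  continuous_toFun := continuous_pi fun n => by split_ifs <;> fun_prop
  continuous_invFun := continuous_pi fun n => by split_ifs <;> fun_prop

theorem flipOutside_apply (I : Finset ℕ) (x : ℕ → Bool) (n : ℕ) :
    flipOutside I x n = if n ∈ I then x n else !x n :=
  rfl

theorem mapsTo_flipOutside_pi (I : Finset ℕ) (x₀ : ℕ → Bool) :
    MapsTo (flipOutside I) ((I : Set ℕ).pi fun i => {x₀ i}) ((I : Set ℕ).pi fun i => {x₀ i}) :=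
  fun x hx i hi => by simpa [flipOutside_apply, Finset.mem_coe.1 hi] using hx i hi

theorem setOf_inter_setOf_flipOutside_subset (I : Finset ℕ) (x : ℕ → Bool) :
    {n | x n = true} ∩ {n | flipOutside I x n = true} ⊆ I := by
  rintro n ⟨hx, hfx⟩
  by_contra hn
  simp_all [flipOutside_apply]

/-- Every free filter on `ℕ` which has the Baire property (identified with a subset of
Cantor space) is meager: every free filter is either meager or lacks the Baire property. -/
theorem free_filter_meager_or_no_baire_property
    (F : Set (Set ℕ)) (hF : IsFreeFilter F)
    (hbaire : BaireMeasurableSet (chi '' F)) :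
    IsMeagre (chi '' F) := by
  by_contra hmeagre
  obtain ⟨U, hU, ⟨x₀, hx₀⟩, hUA⟩ := hbaire.exists_isOpen_nonempty_isMeagre_diff hmeagre
  obtain ⟨I, hIU⟩ := exists_finset_pi_singleton_subset hU hx₀
  have hI : IsOpen ((I : Set ℕ).pi fun i => {x₀ i}) :=
    isOpen_set_pi I.finite_toSet fun _ _ => isOpen_discrete _
  obtain ⟨x, hx, hfx⟩ := (hUA.mono (sdiff_subset_sdiff_left hIU)).exists_mem_and_map_mem hI
    ⟨x₀, fun _ _ => rfl⟩ (flipOutside I) (mapsTo_flipOutside_pi I x₀)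
  rw [mem_image_chi_iff] at hx hfx
  exact hF.infinite_inter hx hfx <|
    I.finite_toSet.subset (setOf_inter_setOf_flipOutside_subset I x)
end
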